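/- arXiv:2401.10099 — 7 statements merged into one kernel-verified Lean document; each statement's English description precedes it below -/
import Mathlib

section
/- Let γ, ω > 0. For any measurable control θ(t) and any solution (r_x(t), R(t)) of the auxiliary system with r_x(t_0)² + R(t_0)² < 1 at some time t_0, one has r_x(t)² + R(t)² < 1 for all t ≥ t_0; in fact 1 - r_x²(t) - R²(t) ≥ (1 - r_x²(t_0) - R²(t_0)) e^{-γ(t - t_0)}. -/
open Real

/-! The disk deficit `W = 1 - r_x² - R²` satisfies
`W' = -γ W + γ (1 - R sin θ)² ≥ -γ W` along the auxiliary system, whatever the control.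
Hence `W(t) e^{γ(t - t₀)}` is nondecreasing, which is the exponential lower bound; it is positive
once `W(t₀) > 0`. -/

theorem mul_exp_neg_le_of_hasDerivAt {W W' : ℝ → ℝ} {γ : ℝ}
    (hW : ∀ t, HasDerivAt W (W' t) t) (hW' : ∀ t, -γ * W t ≤ W' t)
    {t₀ t : ℝ} (ht : t₀ ≤ t) :
    W t₀ * exp (-γ * (t - t₀)) ≤ W t := by
  set g : ℝ → ℝ := fun s => W s * exp (γ * (s - t₀))
  have hg : ∀ s, HasDerivAt g ((W' s + γ * W s) * exp (γ * (s - t₀))) s := fun s => by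
    have he : HasDerivAt (fun s => exp (γ * (s - t₀))) (exp (γ * (s - t₀)) * (γ * 1)) s :=
      (((hasDerivAt_id s).sub_const t₀).const_mul γ).exp
    exact ((hW s).mul he).congr_deriv (by ring)
  have hmono : Monotone g := monotone_of_deriv_nonneg (fun s => (hg s).differentiableAt)
    fun s => by
      rw [(hg s).deriv]
      exact mul_nonneg (by linarith [hW' s]) (exp_pos _).le
  have hle : W t₀ ≤ W t * exp (γ * (t - t₀)) := by simpa [g] using hmono ht
  calc W t₀ * exp (-γ * (t - t₀))
      ≤ W t * exp (γ * (t - t₀)) * exp (-γ * (t - t₀)) :=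
        mul_le_mul_of_nonneg_right hle (exp_pos _).le
    _ = W t := by
      rw [mul_assoc, ← exp_add, show γ * (t - t₀) + -γ * (t - t₀) = 0 by ring, exp_zero, mul_one]

theorem hasDerivAt_one_sub_sq_sub_sq {γ ω : ℝ} {θ rx R : ℝ → ℝ} {t : ℝ}
    (hrx : HasDerivAt rx (-(γ/2) * rx t - ω * R t * cos (θ t)) t)
    (hR : HasDerivAt R (ω * rx t * cos (θ t)
      - (γ/2) * R t * (1 + sin (θ t)^2) + γ * sin (θ t)) t) :
    HasDerivAt (fun s => 1 - rx s ^ 2 - R s ^ 2)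
      (-γ * (1 - rx t ^ 2 - R t ^ 2) + γ * (1 - R t * sin (θ t)) ^ 2) t := by
  refine (((hrx.fun_pow 2).const_sub 1).sub (hR.fun_pow 2)).congr_deriv ?_
  push_cast
  ring

theorem stays_in_open_unit_disk_general (γ ω : ℝ) (hγ : 0 < γ)
    (θ rx R : ℝ → ℝ)
    (hrx : ∀ t, HasDerivAt rx (-(γ/2) * rx t - ω * R t * Real.cos (θ t)) t)
    (hR : ∀ t, HasDerivAt R (ω * rx t * Real.cos (θ t)
      - (γ/2) * R t * (1 + Real.sin (θ t)^2) + γ * Real.sin (θ t)) t)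
    (t₀ : ℝ) (h₀ : rx t₀ ^ 2 + R t₀ ^ 2 < 1) :
    ∀ t, t₀ ≤ t →
      rx t ^ 2 + R t ^ 2 < 1 ∧
      (1 - rx t₀ ^ 2 - R t₀ ^ 2) * Real.exp (-γ * (t - t₀))
        ≤ 1 - rx t ^ 2 - R t ^ 2 := by
  intro t ht
  have hbound := mul_exp_neg_le_of_hasDerivAt
    (fun s => hasDerivAt_one_sub_sq_sub_sq (hrx s) (hR s))
    (fun s => le_add_of_nonneg_right (by positivity)) ht
  have hpos : 0 < (1 - rx t₀ ^ 2 - R t₀ ^ 2) * exp (-γ * (t - t₀)) :=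
    mul_pos (by linarith) (exp_pos _)
  exact ⟨by linarith, hbound⟩

/-- If a solution of the auxiliary system lies strictly inside the unit disk at
time `t₀`, it stays strictly inside for all `t ≥ t₀`; moreover
`1 - r_x²(t) - R²(t) ≥ (1 - r_x²(t₀) - R²(t₀)) e^{-γ(t-t₀)}`. -/
theorem stays_in_open_unit_disk (γ ω : ℝ) (hγ : 0 < γ) (hω : 0 < ω)
    (θ rx R : ℝ → ℝ) (hθ : Measurable θ)
    (hdisk : ∀ t, rx t ^ 2 + R t ^ 2 ≤ 1)
    (hrx : ∀ t, HasDerivAt rx (-(γ/2) * rx t - ω * R t * Real.cos (θ t)) t)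
    (hR : ∀ t, HasDerivAt R (ω * rx t * Real.cos (θ t)
      - (γ/2) * R t * (1 + Real.sin (θ t)^2) + γ * Real.sin (θ t)) t)
    (t₀ : ℝ) (h₀ : rx t₀ ^ 2 + R t₀ ^ 2 < 1) :
    ∀ t, t₀ ≤ t →
      rx t ^ 2 + R t ^ 2 < 1 ∧
      (1 - rx t₀ ^ 2 - R t₀ ^ 2) * Real.exp (-γ * (t - t₀))
        ≤ 1 - rx t ^ 2 - R t ^ 2 :=
  stays_in_open_unit_disk_general γ ω hγ θ rx R hrx hR t₀ h₀
end

section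
/- Let γ, ω > 0 and consider a solution of the auxiliary system with z(t) = √(r_x(t)² + R(t)²) ≤ 1. Then for any measurable control θ(t), the function z satisfies the differential inequalities -γ(z + 1) ≤ dz/dt ≤ γ(1 - z) wherever z > 0. -/
open Real Set

/-!
Write `S = r_x² + R²` and `u = R sin θ`. The rotation terms cancel in `dS/dt`, leaving
`dS/dt = γ (1 - S - (1 - u)²)`, so `ż = γ (1 - z² - (1 - u)²) / (2z)`. Since `|u| ≤ |R| ≤ z ≤ 1`,
we have `(1 - z)² ≤ (1 - u)² ≤ (1 + z)²`, and these two bounds are exactly the claimed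
inequalities `ż ≤ γ (1 - z)` and `-γ (z + 1) ≤ ż`.
-/

lemma radial_rate_bounds {γ z u : ℝ} (hγ : 0 ≤ γ) (hz : 0 < z) (hz1 : z ≤ 1) (hu : |u| ≤ z) :
    -γ * (z + 1) ≤ γ * (1 - z ^ 2 - (1 - u) ^ 2) / (2 * z) ∧
      γ * (1 - z ^ 2 - (1 - u) ^ 2) / (2 * z) ≤ γ * (1 - z) := by
  obtain ⟨hu_low, hu_high⟩ := abs_le.mp hu
  have h_upper : (1 - u) ^ 2 ≤ (1 + z) ^ 2 := sq_le_sq' (by linarith) (by linarith)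
  have h_lower : (1 - z) ^ 2 ≤ (1 - u) ^ 2 := pow_le_pow_left₀ (by linarith) (by linarith) 2
  have h2z : 0 < 2 * z := by positivity
  constructor
  · rw [le_div_iff₀ h2z]
    nlinarith [mul_le_mul_of_nonneg_left h_upper hγ]
  · rw [div_le_iff₀ h2z]
    nlinarith [mul_le_mul_of_nonneg_left h_lower hγ]

lemma hasDerivAt_radius_sq {γ ω : ℝ} {θ rx R : ℝ → ℝ} {t : ℝ}
    (hrx : HasDerivAt rx (-(γ/2) * rx t - ω * R t * Real.cos (θ t)) t)
    (hR : HasDerivAt R (ω * rx t * Real.cos (θ t)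
      - (γ/2) * R t * (1 + Real.sin (θ t)^2) + γ * Real.sin (θ t)) t) :
    HasDerivAt (fun s => rx s ^ 2 + R s ^ 2)
      (γ * (1 - (rx t ^ 2 + R t ^ 2) - (1 - R t * Real.sin (θ t)) ^ 2)) t :=
  ((hrx.pow 2).add (hR.pow 2)).congr_deriv (by push_cast; ring)

lemma abs_mul_sin_le_sqrt (a b x : ℝ) : |b * Real.sin x| ≤ √(a ^ 2 + b ^ 2) :=
  calc |b * Real.sin x| = |b| * |Real.sin x| := abs_mul _ _
    _ ≤ |b| := mul_le_of_le_one_right (abs_nonneg b) (abs_sin_le_one x)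
    _ ≤ √(a ^ 2 + b ^ 2) := Real.abs_le_sqrt (by nlinarith)

theorem radius_differential_inequalities_general (γ ω : ℝ) (hγ : 0 < γ)
    (θ rx R : ℝ → ℝ)
    (hdisk : ∀ t, rx t ^ 2 + R t ^ 2 ≤ 1)
    (hrx : ∀ t, HasDerivAt rx (-(γ/2) * rx t - ω * R t * Real.cos (θ t)) t)
    (hR : ∀ t, HasDerivAt R (ω * rx t * Real.cos (θ t)
      - (γ/2) * R t * (1 + Real.sin (θ t)^2) + γ * Real.sin (θ t)) t)
    (z : ℝ → ℝ) (hz : ∀ t, z t = Real.sqrt (rx t ^ 2 + R t ^ 2)) :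
    ∀ t, 0 < z t →
      ∃ d : ℝ, HasDerivAt z d t ∧ -γ * (z t + 1) ≤ d ∧ d ≤ γ * (1 - z t) := by
  intro t hzt
  have hS_pos : 0 < rx t ^ 2 + R t ^ 2 := Real.sqrt_pos.mp (hz t ▸ hzt)
  have hz_sq : z t ^ 2 = rx t ^ 2 + R t ^ 2 := by rw [hz t, Real.sq_sqrt hS_pos.le]
  have hz_deriv := (hasDerivAt_radius_sq (hrx t) (hR t)).sqrt hS_pos.ne'
  rw [← funext hz, ← hz t, ← hz_sq] at hz_deriv
  refine ⟨_, hz_deriv, radial_rate_bounds hγ.le hzt ?_ ?_⟩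
  · rw [hz t]
    exact Real.sqrt_le_one.mpr (hdisk t)
  · rw [hz t]
    exact abs_mul_sin_le_sqrt _ _ _

/-- Along any solution of the auxiliary system inside the unit disk, the radius
`z = √(r_x² + R²)` satisfies the differential inequalities
`-γ(z+1) ≤ ż ≤ γ(1-z)` wherever `z > 0`. -/
theorem radius_differential_inequalities (γ ω : ℝ) (hγ : 0 < γ) (hω : 0 < ω)
    (θ rx R : ℝ → ℝ) (hθ : Measurable θ)
    (hdisk : ∀ t, rx t ^ 2 + R t ^ 2 ≤ 1)
    (hrx : ∀ t, HasDerivAt rx (-(γ/2) * rx t - ω * R t * Real.cos (θ t)) t)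
    (hR : ∀ t, HasDerivAt R (ω * rx t * Real.cos (θ t)
      - (γ/2) * R t * (1 + Real.sin (θ t)^2) + γ * Real.sin (θ t)) t)
    (z : ℝ → ℝ) (hz : ∀ t, z t = Real.sqrt (rx t ^ 2 + R t ^ 2)) :
    ∀ t, 0 < z t →
      ∃ d : ℝ, HasDerivAt z d t ∧ -γ * (z t + 1) ≤ d ∧ d ≤ γ * (1 - z t) :=
  radius_differential_inequalities_general γ ω hγ θ rx R hdisk hrx hR z hz
end

section
/- Let γ > 0, 0 ≤ μ₀ ≤ 1, 0 ≤ μ₁ < 1, μ₀ ≠ μ₁, and σ = sgn(μ₁ - μ₀). If z : [0, T] → [0, 1] is absolutely continuous with z(0) = μ₀, z(T) = μ₁ and satisfies -γ(z + 1) ≤ ż ≤ γ(1 - z) almost everywhere, then T ≥ (1/γ) ln((1 - σ μ₀)/(1 - σ μ₁)). -/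
open Real Set MeasureTheory intervalIntegral

/-!
Put `w = 1 - σ z`. Since `|σ| ≤ 1`, the two differential inequalities combine into `-ẇ ≤ γ w`
a.e., so `w` can decay at most exponentially at rate `γ`: a backward Gronwall argument gives
`1 - σ μ₀ = w 0 ≤ w T e^{γ T} = (1 - σ μ₁) e^{γ T}`, and taking logarithms gives the bound on `T`.
-/

theorem le_mul_exp_of_le_add_integral {u : ℝ → ℝ} {a b c γ : ℝ} (hab : a ≤ b) (hγ : 0 ≤ γ)
    (hu : ContinuousOn u (Icc a b)) (h : ∀ t ∈ Icc a b, u t ≤ c + γ * ∫ s in t..b, u s) :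
    u a ≤ c * exp (γ * (b - a)) := by
  -- The right-hand side of `h` times the integrating factor `e^{γ t}`.
  set Q : ℝ → ℝ := fun t => (c + γ * ∫ s in t..b, u s) * exp (γ * t)
  have hQ_cont : ContinuousOn Q (Icc a b) := by
    have := continuousOn_primitive_interval_left (μ := volume)
      (hu.integrableOn_compact isCompact_Icc |>.mono_set (uIcc_of_le hab).subset)
    rw [uIcc_of_le hab] at this
    exact ((continuousOn_const.add (continuousOn_const.mul this)).mul
      (continuous_exp.comp (continuous_const.mul continuous_id)).continuousOn)
  have hQ_deriv : ∀ t ∈ Ioo a b, HasDerivAt Q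
      (γ * exp (γ * t) * (c + γ * (∫ s in t..b, u s) - u t)) t := by
    intro t ht
    have hprim : HasDerivAt (fun t => ∫ s in t..b, u s) (-u t) t :=
      integral_hasDerivAt_left
        ((hu.mono (Icc_subset_Icc ht.1.le le_rfl)).intervalIntegrable_of_Icc ht.2.le)
        ((hu.mono Ioo_subset_Icc_self).stronglyMeasurableAtFilter isOpen_Ioo t ht)
        (hu.continuousAt (Icc_mem_nhds ht.1 ht.2))
    have hexp : HasDerivAt (fun t => exp (γ * t)) (exp (γ * t) * γ) t := by
      simpa using ((hasDerivAt_id t).const_mul γ).exp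
    exact (((hprim.const_mul γ).const_add c).fun_mul hexp).congr_deriv (by ring)
  have hQ_mono : MonotoneOn Q (Icc a b) := by
    refine monotoneOn_of_hasDerivWithinAt_nonneg (convex_Icc a b) hQ_cont
      (f' := fun t => γ * exp (γ * t) * (c + γ * (∫ s in t..b, u s) - u t))
      (fun t ht => ?_) (fun t ht => ?_) <;> rw [interior_Icc] at ht
    · exact (hQ_deriv t ht).hasDerivWithinAt
    · have hut := h t (Ioo_subset_Icc_self ht)
      exact mul_nonneg (mul_nonneg hγ (exp_pos _).le) (by linarith)
  have hQab : Q a ≤ Q b := hQ_mono (left_mem_Icc.2 hab) (right_mem_Icc.2 hab) hab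
  have hQb : Q b = c * exp (γ * b) := by simp [Q]
  calc u a ≤ c + γ * ∫ s in a..b, u s := h a (left_mem_Icc.2 hab)
    _ = Q a * exp (γ * (b - a)) / exp (γ * b) := by
        simp only [Q, mul_sub, exp_sub]; field_simp
    _ ≤ Q b * exp (γ * (b - a)) / exp (γ * b) := by gcongr
    _ = c * exp (γ * (b - a)) := by rw [hQb]; field_simp

theorem le_mul_exp_of_neg_deriv_le {w w' : ℝ → ℝ} {a b γ : ℝ} (hab : a ≤ b) (hγ : 0 ≤ γ)
    (hw' : IntervalIntegrable w' volume a b)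
    (hw : ∀ t ∈ Icc a b, w t = w a + ∫ s in a..t, w' s)
    (hineq : ∀ᵐ s, s ∈ Icc a b → -w' s ≤ γ * w s) :
    w a ≤ w b * exp (γ * (b - a)) := by
  have hw_cont : ContinuousOn w (Icc a b) := by
    have := continuousOn_primitive_interval (μ := volume) (f := w')
      (by rw [uIcc_of_le hab]; exact (intervalIntegrable_iff_integrableOn_Icc_of_le hab).1 hw')
    rw [uIcc_of_le hab] at this
    exact (continuousOn_const.add this).congr hw
  refine le_mul_exp_of_le_add_integral hab hγ hw_cont fun t ht => ?_
  have hw'_t : IntervalIntegrable w' volume t b :=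
    hw'.mono_set (by rw [uIcc_of_le hab, uIcc_of_le ht.2]; exact Icc_subset_Icc ht.1 le_rfl)
  have hdiff : w b - w t = ∫ s in t..b, w' s := by
    rw [hw b (right_mem_Icc.2 hab), hw t ht, add_sub_add_left_eq_sub,
      integral_interval_sub_left hw' (hw'.mono_set _)]
    rw [uIcc_of_le hab, uIcc_of_le ht.1]; exact Icc_subset_Icc le_rfl ht.2
  have hmono : ∫ s in t..b, -w' s ≤ ∫ s in t..b, γ * w s := by
    have hw_t : IntervalIntegrable w volume t b :=
      (hw_cont.mono (Icc_subset_Icc ht.1 le_rfl)).intervalIntegrable_of_Icc ht.2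
    refine integral_mono_ae_restrict ht.2 hw'_t.neg (hw_t.const_mul γ) ?_
    rw [Filter.EventuallyLE, ae_restrict_iff' measurableSet_Icc]
    filter_upwards [hineq] with s hs hst using hs ⟨ht.1.trans hst.1, hst.2⟩
  rw [intervalIntegral.integral_neg, intervalIntegral.integral_const_mul, ← hdiff] at hmono
  linarith

theorem minimal_time_lower_bound_general (γ T μ₀ μ₁ σ : ℝ) (hγ : 0 < γ)
    (hμ₀ : μ₀ ∈ Set.Icc (0:ℝ) 1) (hμ₁0 : 0 ≤ μ₁) (hμ₁1 : μ₁ < 1)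
    (hσ : σ = Real.sign (μ₁ - μ₀)) (hT : 0 ≤ T)
    (z z' : ℝ → ℝ)
    (h0 : z 0 = μ₀) (h1 : z T = μ₁)
    (hint : IntervalIntegrable z' volume 0 T)
    (hac : ∀ t ∈ Set.Icc 0 T, z t = μ₀ + ∫ s in (0:ℝ)..t, z' s)
    (hineq : ∀ᵐ s, s ∈ Set.Icc 0 T →
      -γ * (z s + 1) ≤ z' s ∧ z' s ≤ γ * (1 - z s)) :
    (1/γ) * Real.log ((1 - σ * μ₀) / (1 - σ * μ₁)) ≤ T := by
  have hσ1 : |σ| ≤ 1 := by rcases sign_apply_eq (μ₁ - μ₀) with h | h | h <;> simp [hσ, h]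
  obtain ⟨hσl, hσu⟩ := abs_le.1 hσ1
  have hnum : 0 ≤ 1 - σ * μ₀ := by nlinarith [hμ₀.1, hμ₀.2]
  have hden : 0 < 1 - σ * μ₁ := by nlinarith
  have hdecay : 1 - σ * μ₀ ≤ (1 - σ * μ₁) * exp (γ * T) := by
    have := le_mul_exp_of_neg_deriv_le (w := fun t => 1 - σ * z t) (w' := fun s => -(σ * z' s))
      hT hγ.le (hint.const_mul σ).neg (fun t ht => ?_) ?_
    · simpa [h0, h1] using this
    · simp only [hac t ht, h0, intervalIntegral.integral_neg,
        intervalIntegral.integral_const_mul]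
      ring
    · filter_upwards [hineq] with s hs hsI
      obtain ⟨hlo, hhi⟩ := hs hsI
      -- `σ z'` is a convex combination of `z'` and `-z'` with weights `(1 ± σ)/2`.
      nlinarith [mul_le_mul_of_nonneg_left hhi (by linarith : 0 ≤ 1 + σ),
        mul_le_mul_of_nonneg_left hlo (by linarith : 0 ≤ 1 - σ)]
  have hratio : (1 - σ * μ₀) / (1 - σ * μ₁) ≤ exp (γ * T) := (div_le_iff₀ hden).2 (by linarith)
  rw [one_div, inv_mul_le_iff₀ hγ]
  rcases (div_nonneg hnum hden.le).eq_or_lt with h | h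
  · rw [← h, log_zero]; positivity
  · exact (log_le_iff_le_exp h).2 hratio

/-- Lower bound on the time needed to move the radius from `μ₀` to `μ₁`:
any absolutely continuous `z : [0,T] → [0,1]` with
`-γ(z+1) ≤ ż ≤ γ(1-z)` a.e. satisfies
`T ≥ (1/γ) ln((1 - σμ₀)/(1 - σμ₁))` where `σ = sgn(μ₁ - μ₀)`. -/
theorem minimal_time_lower_bound (γ T μ₀ μ₁ σ : ℝ) (hγ : 0 < γ)
    (hμ₀ : μ₀ ∈ Set.Icc (0:ℝ) 1) (hμ₁0 : 0 ≤ μ₁) (hμ₁1 : μ₁ < 1)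
    (hne : μ₀ ≠ μ₁) (hσ : σ = Real.sign (μ₁ - μ₀)) (hT : 0 ≤ T)
    (z z' : ℝ → ℝ)
    (hmap : ∀ t ∈ Set.Icc 0 T, z t ∈ Set.Icc (0:ℝ) 1)
    (h0 : z 0 = μ₀) (h1 : z T = μ₁)
    (hint : IntervalIntegrable z' volume 0 T)
    (hac : ∀ t ∈ Set.Icc 0 T, z t = μ₀ + ∫ s in (0:ℝ)..t, z' s)
    (hineq : ∀ᵐ s, s ∈ Set.Icc 0 T →
      -γ * (z s + 1) ≤ z' s ∧ z' s ≤ γ * (1 - z s)) :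
    (1/γ) * Real.log ((1 - σ * μ₀) / (1 - σ * μ₁)) ≤ T :=
  minimal_time_lower_bound_general γ T μ₀ μ₁ σ hγ hμ₀ hμ₁0 hμ₁1 hσ hT z z' h0 h1 hint hac hineq
end

section
/- Fix γ, ω > 0 and r_x, R ∈ ℝ with 0 < |R| ≤ 1. Then the closed curve θ ↦ (1/ω)(ṙ_x, Ṙ)(θ) = (-(γ/(2ω)) r_x - R cos θ, r_x cos θ - (γ/(2ω)) R (1 + sin²θ) + (γ/ω) sin θ), θ ∈ [0, 2π], is the boundary of a convex compact subset of ℝ². -/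
/-!
With `k = γ / ω` the curve is `θ ↦ L (cos θ, h (cos θ) + sin θ)`, where
`h u = (R / 2) u² + (rx / k) u - R` and `L (u, y) = (-(k / 2) rx - R u, k y)` is an affine
equivalence. The shear `(u, v) ↦ (u, h u + v)` is a homeomorphism carrying the unit disk onto the
region between the graphs of `h ± √(1 - u²)` over `[-1, 1]`, and this region is convex because
`a u² + √(1 - u²)` is concave on `[-1, 1]` whenever `a ≤ 1 / 2`; here `|a| = |R| / 2 ≤ 1 / 2`.
The affine homeomorphism `L` then preserves compactness, convexity and frontiers.
-/

open Real Set

/-- Not `Metric.closedBall 0 1`, which is a square for the sup norm of `ℝ × ℝ`. -/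
def unitDisk : Set (ℝ × ℝ) := {p | p.1 ^ 2 + p.2 ^ 2 ≤ 1}

lemma unitDisk_eq_image_closedBall :
    unitDisk = Complex.equivRealProdCLM.toHomeomorph '' Metric.closedBall 0 1 := by
  ext p
  rw [Homeomorph.image_eq_preimage_symm]
  simp [unitDisk, Complex.norm_def, Complex.normSq_apply, ← sq]

lemma isCompact_unitDisk : IsCompact unitDisk := by
  rw [unitDisk_eq_image_closedBall]
  exact (isCompact_closedBall 0 1).image (Homeomorph.continuous _)

lemma frontier_unitDisk : frontier unitDisk = (fun θ => (cos θ, sin θ)) '' Icc 0 (2 * π) := by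
  have hper : Function.Periodic (fun θ => (cos θ, sin θ)) (2 * π) := fun θ => by simp
  rw [unitDisk_eq_image_closedBall, ← Homeomorph.image_frontier, frontier_closedBall _ one_ne_zero,
    ← Complex.range_exp_mul_I, ← range_comp, ← zero_add (2 * π), hper.image_Icc two_pi_pos]
  congr 1
  ext θ <;> simp [Complex.exp_ofReal_mul_I_re, Complex.exp_ofReal_mul_I_im]

lemma concaveOn_sqrt_one_sub_sq : ConcaveOn ℝ (Icc (-1) 1) fun u : ℝ => √(1 - u ^ 2) := by
  refine ⟨convex_Icc _ _, fun x hx y hy a b ha hb hab => ?_⟩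
  have hx' : 0 ≤ 1 - x ^ 2 := by nlinarith [hx.1, hx.2]
  have hy' : 0 ≤ 1 - y ^ 2 := by nlinarith [hy.1, hy.2]
  calc a • √(1 - x ^ 2) + b • √(1 - y ^ 2) ≤ √(a • (1 - x ^ 2) + b • (1 - y ^ 2)) :=
        strictConcaveOn_sqrt.concaveOn.2 hx' hy' ha hb hab
    _ ≤ √(1 - (a • x + b • y) ^ 2) := by
        gcongr
        simp only [smul_eq_mul]
        obtain rfl : b = 1 - a := by linarith
        nlinarith [mul_nonneg (mul_nonneg ha hb) (sq_nonneg (x - y))]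

lemma concaveOn_quadratic_add_sqrt_one_sub_sq {a : ℝ} (ha : a ≤ 1 / 2) (b d : ℝ) :
    ConcaveOn ℝ (Icc (-1) 1) fun u => a * u ^ 2 + b * u + d + √(1 - u ^ 2) := by
  -- On `[-1, 1]`, `√(1 - u²) + u² / 2 = 1 - (1 - √(1 - u²))² / 2`, and `1 - √(1 - u²) ≥ 0` is convex.
  have hw : ConvexOn ℝ (Icc (-1) 1) fun u : ℝ => (1 - √(1 - u ^ 2)) ^ 2 :=
    (concaveOn_sqrt_one_sub_sq.neg.add_const 1).pow
      (fun u _ => by simpa using sqrt_le_one.2 (by nlinarith : 1 - u ^ 2 ≤ 1)) 2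
      |>.congr fun u _ => by simp [neg_add_eq_sub]
  have hsq : ConvexOn ℝ (Icc (-1) 1) fun u : ℝ => u ^ 2 :=
    even_two.convexOn_pow.subset (subset_univ _) (convex_Icc _ _)
  have hconv := ((hsq.smul (sub_nonneg.2 ha)).add (hw.smul (by norm_num : (0 : ℝ) ≤ 1 / 2))).sub
    (((LinearMap.mulLeft ℝ b).concaveOn (convex_Icc _ _)).add_const (d + 1))
  refine hconv.neg.congr fun u hu => ?_
  have hu' : 0 ≤ 1 - u ^ 2 := by nlinarith [hu.1, hu.2]
  simp only [Pi.neg_apply, Pi.sub_apply, Pi.add_apply, LinearMap.mulLeft_apply, smul_eq_mul]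
  linear_combination (-1 / 2 : ℝ) * sq_sqrt hu'

def shearHomeomorph {X G : Type*} [TopologicalSpace X] [TopologicalSpace G] [AddGroup G]
    [IsTopologicalAddGroup G] (h : X → G) (hh : Continuous h) : X × G ≃ₜ X × G where
  toFun p := (p.1, h p.1 + p.2)
  invFun p := (p.1, -h p.1 + p.2)
  left_inv p := by simp
  right_inv p := by simp
  continuous_toFun := by fun_prop
  continuous_invFun := by fun_prop

lemma shearHomeomorph_image_unitDisk (h : ℝ → ℝ) (hh : Continuous h) :
    shearHomeomorph h hh '' unitDisk =
      {p | p.1 ∈ Icc (-1) 1 ∧ h p.1 - √(1 - p.1 ^ 2) ≤ p.2 ∧ p.2 ≤ h p.1 + √(1 - p.1 ^ 2)} := by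
  ext ⟨u, y⟩
  rw [Homeomorph.image_eq_preimage_symm]
  change u ^ 2 + (-h u + y) ^ 2 ≤ 1 ↔
    u ∈ Icc (-1) 1 ∧ h u - √(1 - u ^ 2) ≤ y ∧ y ≤ h u + √(1 - u ^ 2)
  constructor
  · intro hp
    have hu : u ^ 2 ≤ 1 := by nlinarith
    obtain ⟨h1, h2⟩ := (Real.sq_le (by linarith)).1 (by linarith : (-h u + y) ^ 2 ≤ 1 - u ^ 2)
    exact ⟨⟨by nlinarith, by nlinarith⟩, by linarith, by linarith⟩
  · rintro ⟨hu, h1, h2⟩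
    have hu' : 0 ≤ 1 - u ^ 2 := by nlinarith [hu.1, hu.2]
    have := (Real.sq_le (x := -h u + y) hu').2 ⟨by linarith, by linarith⟩
    linarith

lemma convex_shearHomeomorph_quadratic_image_unitDisk {a : ℝ} (ha : |a| ≤ 1 / 2) (b d : ℝ) :
    Convex ℝ (shearHomeomorph (fun u => a * u ^ 2 + b * u + d) (by fun_prop) '' unitDisk) := by
  rw [shearHomeomorph_image_unitDisk]
  have hlow := (concaveOn_quadratic_add_sqrt_one_sub_sq ((neg_le_abs a).trans ha) (-b) (-d)).neg
  have hup := concaveOn_quadratic_add_sqrt_one_sub_sq ((le_abs_self a).trans ha) b d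
  convert hlow.convex_epigraph.inter hup.convex_hypograph using 1
  ext p
  simp only [mem_ofPred_eq, mem_inter_iff, Pi.neg_apply]
  exact ⟨fun ⟨hp, h1, h2⟩ => ⟨⟨hp, by linarith⟩, hp, h2⟩,
    fun ⟨⟨hp, h1⟩, _, h2⟩ => ⟨hp, by linarith, h2⟩⟩

theorem exists_isCompact_convex_frontier_eq_affine_image_sheared_circle
    (L : ℝ × ℝ ≃ᴬ[ℝ] ℝ × ℝ) {a : ℝ} (ha : |a| ≤ 1 / 2) (b d : ℝ) :
    ∃ U : Set (ℝ × ℝ), IsCompact U ∧ Convex ℝ U ∧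
      frontier U = (fun θ => L (cos θ, a * cos θ ^ 2 + b * cos θ + d + sin θ)) '' Icc 0 (2 * π) := by
  set S := shearHomeomorph (fun u => a * u ^ 2 + b * u + d) (by fun_prop)
  refine ⟨L.toHomeomorph '' (S '' unitDisk),
    (isCompact_unitDisk.image S.continuous).image L.continuous,
    (convex_shearHomeomorph_quadratic_image_unitDisk ha b d).affine_image
      L.toAffineEquiv.toAffineMap, ?_⟩
  rw [← L.toHomeomorph.image_frontier, ← S.image_frontier, frontier_unitDisk, image_image,
    image_image]
  rfl

noncomputable def scaleTranslate (x₀ α β : ℝ) (hα : α ≠ 0) (hβ : β ≠ 0) :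
    ℝ × ℝ ≃ᵃ[ℝ] ℝ × ℝ :=
  ((LinearEquiv.smulOfNeZero ℝ ℝ α hα).prodCongr
    (LinearEquiv.smulOfNeZero ℝ ℝ β hβ)).toAffineEquiv.trans (AffineEquiv.constVAdd ℝ _ (x₀, 0))

/-- For `0 < |R| ≤ 1`, the closed curve of admissible (normalized) velocities
of the auxiliary qubit system is the boundary of a convex compact set. -/
theorem velocity_set_convex_compact (γ ω rx R : ℝ) (hγ : 0 < γ) (hω : 0 < ω)
    (hR0 : 0 < |R|) (hR1 : |R| ≤ 1) :
    ∃ U : Set (ℝ × ℝ), IsCompact U ∧ Convex ℝ U ∧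
      frontier U =
        (fun θ : ℝ => (-(γ/(2*ω)) * rx - R * Real.cos θ,
          rx * Real.cos θ - (γ/(2*ω)) * R * (1 + Real.sin θ ^ 2)
            + (γ/ω) * Real.sin θ)) '' Set.Icc 0 (2 * π) := by
  have hk : γ / ω ≠ 0 := (div_pos hγ hω).ne'
  obtain ⟨U, hU, hconv, hfr⟩ := exists_isCompact_convex_frontier_eq_affine_image_sheared_circle
    (scaleTranslate (-(γ / (2 * ω)) * rx) (-R) (γ / ω) (neg_ne_zero.2 (abs_pos.1 hR0))
      hk).toContinuousAffineEquiv
    (a := R / 2) (by rw [abs_div, abs_two]; linarith) (rx / (γ / ω)) (-R)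
  refine ⟨U, hU, hconv, hfr.trans (image_congr fun θ _ => ?_)⟩
  simp only [AffineEquiv.coe_toContinuousAffineEquiv, scaleTranslate, AffineEquiv.trans_apply,
    LinearEquiv.coe_toAffineEquiv, LinearEquiv.prodCongr_apply, LinearEquiv.smulOfNeZero_apply,
    AffineEquiv.constVAdd_apply, smul_eq_mul, vadd_eq_add, Prod.mk_add_mk, sin_sq]
  ext
  · ring
  · field_simp
    ring
end

section
/- Let γ, ω > 0 with γ/ω ≤ 2/π, let μ₀, μ₁ ∈ [0, 1] with μ₁ ≤ 1 - (π/2)(γ/ω), let τ₀, τ₁ ∈ [0, π/(2ω)], set R̃⁰ = μ₀ e^{-(γ/2)τ₀}, R̃¹ = μ₁ e^{(γ/2)τ₁}, σ = sgn(μ₁ - μ₀), σ̃ = sgn(R̃¹ - R̃⁰) (each ±1). If σ = σ̃ = 1 then ln((1 - R̃⁰)/(1 - R̃¹)) - ln((1 - μ₀)/(1 - μ₁)) ≤ 3/2. -/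
/-!
Both corrections are governed by `x = (γ/2)τ ≤ (1 - μ₁)/2 ≤ (1 - μ₀)/2`. Contracting `μ₀` by
`e^{-x}` enlarges `1 - μ₀` by at most the factor `3/2`, and stretching `μ₁` by `e^{x}` shrinks
`1 - μ₁` by at most the factor `2` (via `e^x ≤ 1/(1 - x)`). Hence the excess logarithmic time
is at most `log 3 < 3/2`.
-/

open Real

lemma Real.pos_of_sign_eq_one {r : ℝ} (h : Real.sign r = 1) : 0 < r := by
  unfold Real.sign at h
  split_ifs at h with hneg hpos <;> first | assumption | norm_num at h

lemma Real.one_sub_mul_exp_le_one (x : ℝ) : (1 - x) * exp x ≤ 1 := by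
  calc (1 - x) * exp x ≤ exp (-x) * exp x :=
        mul_le_mul_of_nonneg_right (one_sub_le_exp_neg x) (exp_pos x).le
    _ = 1 := by rw [← exp_add, neg_add_cancel, exp_zero]

lemma one_sub_le_two_mul_one_sub_mul_exp {μ x : ℝ} (hμ₀ : 0 ≤ μ) (hμ₁ : μ ≤ 1)
    (hx : 2 * x ≤ 1 - μ) : 1 - μ ≤ 2 * (1 - μ * exp x) := by
  have hexp : 2 * μ * ((1 - x) * exp x) ≤ 2 * μ :=
    mul_le_of_le_one_right (by positivity) (one_sub_mul_exp_le_one x)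
  have hlin : 2 * μ ≤ (1 + μ) * (1 - x) := by nlinarith
  nlinarith [exp_pos x]

lemma one_sub_mul_exp_neg_le {μ y : ℝ} (hμ₀ : 0 ≤ μ) (hμ₁ : μ ≤ 1) (hy₀ : 0 ≤ y)
    (hy : 2 * y ≤ 1 - μ) : 1 - μ * exp (-y) ≤ 3 / 2 * (1 - μ) := by
  have : μ * (1 - y) ≤ μ * exp (-y) :=
    mul_le_mul_of_nonneg_left (one_sub_le_exp_neg y) hμ₀
  nlinarith [mul_nonneg (sub_nonneg.mpr hμ₁) hy₀]

lemma Real.log_div_sub_log_div_le_log {a b c d k : ℝ} (ha : 0 < a) (hb : 0 < b) (hc : 0 < c)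
    (hd : 0 < d) (h : a * d ≤ k * (b * c)) : log (a / b) - log (c / d) ≤ log k := by
  rw [← log_div (by positivity) (by positivity)]
  refine log_le_log (by positivity) ?_
  rw [div_div_div_eq, div_le_iff₀ (by positivity)]
  exact h

lemma two_mul_half_mul_le_of_le_div {γ ω τ : ℝ} (hγ : 0 ≤ γ) (hτ : τ ≤ π / (2 * ω)) :
    2 * (γ / 2 * τ) ≤ π / 2 * (γ / ω) :=
  calc 2 * (γ / 2 * τ) = γ * τ := by ring
    _ ≤ γ * (π / (2 * ω)) := mul_le_mul_of_nonneg_left hτ hγ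
    _ = π / 2 * (γ / ω) := by ring

theorem upper_estimate_case_one_general (γ ω μ₀ μ₁ τ₀ τ₁ R0 R1 : ℝ)
    (hγ : 0 < γ) (hω : 0 < ω)
    (hμ₀ : μ₀ ∈ Set.Icc (0:ℝ) 1) (hμ₁ : μ₁ ∈ Set.Icc (0:ℝ) 1)
    (hμ₁' : μ₁ ≤ 1 - (π/2) * (γ/ω))
    (hτ₀ : τ₀ ∈ Set.Icc (0:ℝ) (π/(2*ω))) (hτ₁ : τ₁ ∈ Set.Icc (0:ℝ) (π/(2*ω)))
    (hR0 : R0 = μ₀ * Real.exp (-(γ/2) * τ₀))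
    (hR1 : R1 = μ₁ * Real.exp ((γ/2) * τ₁))
    (hσ : Real.sign (μ₁ - μ₀) = 1) :
    Real.log ((1 - R0) / (1 - R1)) - Real.log ((1 - μ₀) / (1 - μ₁)) ≤ 3/2 := by
  have hμ : μ₀ < μ₁ := sub_pos.mp (pos_of_sign_eq_one hσ)
  have hμ₁_lt : μ₁ < 1 := by
    have : 0 < π / 2 * (γ / ω) := by positivity
    linarith
  have hy := two_mul_half_mul_le_of_le_div hγ.le hτ₀.2
  have hx := two_mul_half_mul_le_of_le_div hγ.le hτ₁.2
  have hR0_le : 1 - R0 ≤ 3 / 2 * (1 - μ₀) := by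
    rw [hR0, neg_mul]
    exact one_sub_mul_exp_neg_le hμ₀.1 hμ₀.2 (mul_nonneg (by positivity) hτ₀.1) (by linarith)
  have hR1_ge : 1 - μ₁ ≤ 2 * (1 - R1) := by
    rw [hR1]
    exact one_sub_le_two_mul_one_sub_mul_exp hμ₁.1 hμ₁.2 (by linarith)
  have hR0_lt : R0 < 1 := by
    rw [hR0]
    calc μ₀ * exp (-(γ / 2) * τ₀) ≤ μ₀ := mul_le_of_le_one_right hμ₀.1
          (exp_le_one_iff.mpr (mul_nonpos_of_nonpos_of_nonneg (by linarith) hτ₀.1))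
      _ < 1 := hμ.trans hμ₁_lt
  calc log ((1 - R0) / (1 - R1)) - log ((1 - μ₀) / (1 - μ₁)) ≤ log 3 :=
        log_div_sub_log_div_le_log (by linarith) (by linarith) (by linarith) (by linarith)
          (by nlinarith)
    _ ≤ 3 / 2 := log_three_lt_d9.le.trans (by norm_num)

/-- Case 1 (σ = σ̃ = 1) of the upper time estimate: the logarithmic time
between the adjusted radii exceeds the ideal logarithmic time by at most 3/2. -/
theorem upper_estimate_case_one (γ ω μ₀ μ₁ τ₀ τ₁ R0 R1 : ℝ)
    (hγ : 0 < γ) (hω : 0 < ω) (h2π : γ / ω ≤ 2 / π)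
    (hμ₀ : μ₀ ∈ Set.Icc (0:ℝ) 1) (hμ₁ : μ₁ ∈ Set.Icc (0:ℝ) 1)
    (hμ₁' : μ₁ ≤ 1 - (π/2) * (γ/ω))
    (hτ₀ : τ₀ ∈ Set.Icc (0:ℝ) (π/(2*ω))) (hτ₁ : τ₁ ∈ Set.Icc (0:ℝ) (π/(2*ω)))
    (hR0 : R0 = μ₀ * Real.exp (-(γ/2) * τ₀))
    (hR1 : R1 = μ₁ * Real.exp ((γ/2) * τ₁))
    (hσ : Real.sign (μ₁ - μ₀) = 1)
    (hσ' : Real.sign (R1 - R0) = 1) :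
    Real.log ((1 - R0) / (1 - R1)) - Real.log ((1 - μ₀) / (1 - μ₁)) ≤ 3/2 :=
  upper_estimate_case_one_general γ ω μ₀ μ₁ τ₀ τ₁ R0 R1 hγ hω hμ₀ hμ₁ hμ₁' hτ₀ hτ₁ hR0 hR1 hσ
end

section
/- Let γ, ω > 0 with γ/ω ≤ 2/π, let μ₀ ∈ [0, 1], μ₁ ∈ [0, 1 - (π/2)(γ/ω)] with μ₁ ≤ μ₀, let τ₀, τ₁ ∈ [0, π/(2ω)], and set R̃⁰ = μ₀ e^{-(γ/2)τ₀}, R̃¹ = μ₁ e^{(γ/2)τ₁}. If R̃⁰ ≤ R̃¹, then ln((1 - R̃⁰)/(1 - R̃¹)) ≤ e and ln((1 + μ₀)/(1 + μ₁)) ≥ 0, hence ln((1 - R̃⁰)/(1 - R̃¹)) - ln((1 + μ₀)/(1 + μ₁)) ≤ e. -/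
open Real

/-- Case 4 (σ = -1, σ̃ = 1) of the upper time estimate. -/
theorem upper_estimate_case_four (γ ω μ₀ μ₁ τ₀ τ₁ R0 R1 : ℝ)
    (hγ : 0 < γ) (hω : 0 < ω) (h2π : γ / ω ≤ 2 / π)
    (hμ₀ : μ₀ ∈ Set.Icc (0:ℝ) 1)
    (hμ₁ : μ₁ ∈ Set.Icc (0:ℝ) (1 - (π/2) * (γ/ω)))
    (hle : μ₁ ≤ μ₀)
    (hτ₀ : τ₀ ∈ Set.Icc (0:ℝ) (π/(2*ω))) (hτ₁ : τ₁ ∈ Set.Icc (0:ℝ) (π/(2*ω)))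
    (hR0 : R0 = μ₀ * Real.exp (-(γ/2) * τ₀))
    (hR1 : R1 = μ₁ * Real.exp ((γ/2) * τ₁))
    (hRR : R0 ≤ R1) :
    Real.log ((1 - R0) / (1 - R1)) ≤ Real.exp 1
    ∧ 0 ≤ Real.log ((1 + μ₀) / (1 + μ₁))
    ∧ Real.log ((1 - R0) / (1 - R1)) - Real.log ((1 + μ₀) / (1 + μ₁))
        ≤ Real.exp 1 := by
  obtain ⟨hμ₀0, hμ₀1⟩ := hμ₀
  obtain ⟨hμ₁0, hμ₁1⟩ := hμ₁
  obtain ⟨hτ₀0, hτ₀1⟩ := hτ₀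
  obtain ⟨hτ₁0, hτ₁1⟩ := hτ₁
  have hπ : (0:ℝ) < π := Real.pi_pos
  have hx0 : 0 < γ / ω := div_pos hγ hω
  set a : ℝ := Real.exp ((π/4) * (γ/ω)) with ha
  have ha0 : 0 < a := Real.exp_pos _
  have hb0 : 0 < a⁻¹ := inv_pos.mpr ha0
  have ha1 : 1 < a := by
    have h := Real.add_one_le_exp ((π/4) * (γ/ω))
    have : 0 < (π/4) * (γ/ω) := by positivity
    rw [ha]; nlinarith
  have hab : a * a⁻¹ = 1 := mul_inv_cancel₀ ha0.ne'
  -- exponent bounds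
  have hτ1e : (γ/2) * τ₁ ≤ (π/4) * (γ/ω) := by
    have h1 : (γ/2) * τ₁ ≤ (γ/2) * (π/(2*ω)) := by
      apply mul_le_mul_of_nonneg_left hτ₁1 (by positivity)
    have h2 : (γ/2) * (π/(2*ω)) = (π/4) * (γ/ω) := by
      field_simp; ring
    linarith
  have hτ0e : -((π/4) * (γ/ω)) ≤ -(γ/2) * τ₀ := by
    have h1 : (γ/2) * τ₀ ≤ (γ/2) * (π/(2*ω)) := by
      apply mul_le_mul_of_nonneg_left hτ₀1 (by positivity)
    have h2 : (γ/2) * (π/(2*ω)) = (π/4) * (γ/ω) := by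
      field_simp; ring
    linarith
  -- key bounds
  have h1 : R1 ≤ μ₁ * a := by
    rw [hR1, ha]
    exact mul_le_mul_of_nonneg_left (Real.exp_le_exp.mpr hτ1e) hμ₁0
  have h2 : μ₁ * a⁻¹ ≤ R0 := by
    rw [hR0, ← Real.exp_neg]
    exact mul_le_mul hle (Real.exp_le_exp.mpr hτ0e) (Real.exp_pos _).le
      (le_trans hμ₁0 hle)
  have h3 : μ₁ ≤ a⁻¹ * a⁻¹ := by
    have he : a⁻¹ * a⁻¹ = Real.exp (-((π/2) * (γ/ω))) := by
      rw [ha, ← Real.exp_neg, ← Real.exp_add]; ring_nf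
    have hexp := Real.add_one_le_exp (-((π/2) * (γ/ω)))
    rw [he]; linarith
  have hR1b : R1 ≤ a⁻¹ := by
    have : μ₁ * a ≤ a⁻¹ * a⁻¹ * a := mul_le_mul_of_nonneg_right h3 ha0.le
    have h4 : a⁻¹ * a⁻¹ * a = a⁻¹ := by field_simp
    linarith
  have hden : 0 < 1 - R1 := by
    have : a⁻¹ < 1 := by
      rw [inv_lt_one_iff₀]; right; exact ha1
    linarith
  have hnum : 0 < 1 - R0 := by linarith
  -- main estimate: (R1 - R0) ≤ 2 * (1 - R1)
  have hkey : R1 - R0 ≤ 2 * (1 - R1) := by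
    nlinarith [mul_nonneg (mul_nonneg (sq_nonneg (a - 1)) (by linarith : (0:ℝ) ≤ 2*a + 1)) (mul_pos (mul_pos hb0 hb0) hb0).le,
      mul_le_mul_of_nonneg_right h3 ha0.le, hab, hμ₁0, ha0.le, hb0.le]
  have hlog1 : Real.log ((1 - R0) / (1 - R1)) ≤ Real.exp 1 := by
    have hl := Real.log_le_sub_one_of_pos (div_pos hnum hden)
    have hq : (1 - R0) / (1 - R1) - 1 ≤ 2 := by
      rw [div_sub_one hden.ne', div_le_iff₀ hden]
      linarith
    have he2 : (2:ℝ) ≤ Real.exp 1 := by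
      have := Real.add_one_le_exp (1:ℝ); linarith
    linarith
  have hlog2 : 0 ≤ Real.log ((1 + μ₀) / (1 + μ₁)) := by
    apply Real.log_nonneg
    rw [le_div_iff₀ (by linarith : (0:ℝ) < 1 + μ₁)]
    linarith
  exact ⟨hlog1, hlog2, by linarith⟩
end

section
/- Let γ, ω > 0 with γ/ω ≤ 2/π, and let μ₀ ∈ [0, 1], μ₁ ∈ [0, 1] with μ₁ ≤ 1 - (π/2)(γ/ω) and μ₀ ≠ μ₁; set σ = sgn(μ₁ - μ₀). Suppose τ₀, τ₁ ∈ [0, π/(2ω)], R̃⁰ = μ₀ e^{-(γ/2)τ₀}, R̃¹ = μ₁ e^{(γ/2)τ₁}, σ̃ = sgn(R̃¹ - R̃⁰), with the convention that if σ = 1 and σ̃ = -1 then τ₀ = τ₁ = 0. Then τ₀ + (1/γ) ln((1 - σ̃ R̃⁰)/(1 - σ̃ R̃¹)) + τ₁ ≤ π/ω + e/γ + (1/γ) ln((1 - σ μ₀)/(1 - σ μ₁)). -/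
open Real

private lemma aux_up (X μ t : ℝ) (hX0 : 0 ≤ X) (hX : X ≤ 1/2) (hμ0 : 0 ≤ μ)
    (hμ : μ ≤ 1 - 2*X) (ht0 : 0 ≤ t) (ht : t ≤ X) :
    (1 - μ)/2 ≤ 1 - μ * Real.exp t := by
  have h1 : Real.exp t ≤ Real.exp X := Real.exp_le_exp.2 ht
  have h4 : (1:ℝ) ≤ Real.exp X := Real.one_le_exp hX0
  have h5 : (1 - X) * Real.exp X ≤ 1 := by
    have h2 : 1 - X ≤ Real.exp (-X) := by linarith [Real.add_one_le_exp (-X)]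
    have h3 : Real.exp (-X) * Real.exp X = 1 := by rw [← Real.exp_add]; simp
    nlinarith [Real.exp_pos X]
  have hm : μ * Real.exp t ≤ μ * Real.exp X := mul_le_mul_of_nonneg_left h1 hμ0
  nlinarith [mul_nonneg (by linarith : (0:ℝ) ≤ 1 - 2*X - μ) (by linarith : (0:ℝ) ≤ Real.exp X - 1),
    mul_le_mul_of_nonneg_left h4 hX0]

private lemma aux_down (X μ t : ℝ) (hμ0 : 0 ≤ μ) (hμ1 : μ ≤ 1) (ht0 : 0 ≤ t) (ht : t ≤ X) :
    1 - μ * Real.exp (-t) ≤ (1 - μ) + X := by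
  have h1 : 1 - t ≤ Real.exp (-t) := by linarith [Real.add_one_le_exp (-t)]
  have h2 : μ * (1 - t) ≤ μ * Real.exp (-t) := mul_le_mul_of_nonneg_left h1 hμ0
  nlinarith

private lemma finish_lemma (γ ω τ₀ τ₁ p q r s : ℝ) (hγ : 0 < γ) (hτ : τ₀ + τ₁ ≤ π/ω)
    (hp : 0 < p) (hq : 0 < q) (hr : 0 < r) (hs : 0 < s)
    (hkey : p * s ≤ 6 * r * q) :
    τ₀ + (1/γ) * Real.log (p/q) + τ₁ ≤ π/ω + Real.exp 1 / γ + (1/γ) * Real.log (r/s) := by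
  have hdiv : p/q ≤ (6*r)/s := by
    rw [div_le_div_iff₀ hq hs]; nlinarith
  have hlog : Real.log (p/q) ≤ Real.log ((6*r)/s) :=
    Real.log_le_log (div_pos hp hq) hdiv
  have hsplit : Real.log ((6*r)/s) = Real.log 6 + Real.log (r/s) := by
    rw [mul_div_assoc, Real.log_mul (by norm_num) (ne_of_gt (div_pos hr hs))]
  have he1 : (2:ℝ) ≤ Real.exp 1 := by nlinarith [Real.exp_one_gt_d9]
  have hlog6 : Real.log 6 ≤ Real.exp 1 := by
    have h6 : Real.log 6 ≤ 2 := by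
      rw [Real.log_le_iff_le_exp (by norm_num)]
      have : Real.exp 2 = Real.exp 1 * Real.exp 1 := by rw [← Real.exp_add]; norm_num
      nlinarith [Real.exp_one_gt_d9]
    linarith
  have hchain : Real.log (p/q) ≤ Real.exp 1 + Real.log (r/s) := by
    rw [hsplit] at hlog; linarith
  have hmul : (1/γ) * Real.log (p/q) ≤ (1/γ) * (Real.exp 1 + Real.log (r/s)) :=
    mul_le_mul_of_nonneg_left hchain (by positivity)
  have heq : (1/γ) * (Real.exp 1 + Real.log (r/s)) = Real.exp 1 / γ + (1/γ) * Real.log (r/s) := by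
    ring
  linarith

set_option maxHeartbeats 1000000 in
/-- Combined upper bound for the three-stage steering protocol: the total time
`τ₀ + (1/γ) ln((1-σ̃R̃⁰)/(1-σ̃R̃¹)) + τ₁` is at most
`π/ω + e/γ + (1/γ) ln((1-σμ₀)/(1-σμ₁))`. -/
theorem protocol_time_upper_bound (γ ω μ₀ μ₁ τ₀ τ₁ R0 R1 σ σ' : ℝ)
    (hγ : 0 < γ) (hω : 0 < ω) (h2π : γ / ω ≤ 2 / π)
    (hμ₀ : μ₀ ∈ Set.Icc (0:ℝ) 1) (hμ₁ : μ₁ ∈ Set.Icc (0:ℝ) 1)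
    (hμ₁' : μ₁ ≤ 1 - (π/2) * (γ/ω)) (hne : μ₀ ≠ μ₁)
    (hσ : σ = Real.sign (μ₁ - μ₀))
    (hτ₀ : τ₀ ∈ Set.Icc (0:ℝ) (π/(2*ω))) (hτ₁ : τ₁ ∈ Set.Icc (0:ℝ) (π/(2*ω)))
    (hR0 : R0 = μ₀ * Real.exp (-(γ/2) * τ₀))
    (hR1 : R1 = μ₁ * Real.exp ((γ/2) * τ₁))
    (hσ' : σ' = Real.sign (R1 - R0))
    (hconv : σ = 1 → σ' = -1 → τ₀ = 0 ∧ τ₁ = 0) :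
    τ₀ + (1/γ) * Real.log ((1 - σ' * R0) / (1 - σ' * R1)) + τ₁
      ≤ π/ω + Real.exp 1 / γ
        + (1/γ) * Real.log ((1 - σ * μ₀) / (1 - σ * μ₁)) := by
  obtain ⟨hμ₀0, hμ₀1⟩ := hμ₀
  obtain ⟨hμ₁0, hμ₁1⟩ := hμ₁
  obtain ⟨hτ₀0, hτ₀u⟩ := hτ₀
  obtain ⟨hτ₁0, hτ₁u⟩ := hτ₁
  have hπ : (0:ℝ) < π := Real.pi_pos
  -- X := γπ/(4ω)
  set X : ℝ := γ/2 * (π/(2*ω)) with hXdef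
  have hXeq : X = γ*π/(4*ω) := by rw [hXdef]; ring
  have hX0 : 0 < X := by rw [hXeq]; positivity
  have hgp : γ * π ≤ 2 * ω := by
    rw [div_le_div_iff₀ hω hπ] at h2π; linarith
  have hX : X ≤ 1/2 := by
    rw [hXeq, div_le_div_iff₀ (by positivity) (by norm_num)]; linarith
  have hμ₁X : μ₁ ≤ 1 - 2*X := by
    have h : (π/2) * (γ/ω) = 2*X := by rw [hXdef]; ring
    linarith
  have h1μ₁ : 0 < 1 - μ₁ := by linarith
  have ht₀X : γ/2 * τ₀ ≤ X := mul_le_mul_of_nonneg_left hτ₀u (by positivity)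
  have ht₁X : γ/2 * τ₁ ≤ X := mul_le_mul_of_nonneg_left hτ₁u (by positivity)
  have ht₀0 : 0 ≤ γ/2 * τ₀ := mul_nonneg (by positivity) hτ₀0
  have ht₁0 : 0 ≤ γ/2 * τ₁ := mul_nonneg (by positivity) hτ₁0
  have hτsum : τ₀ + τ₁ ≤ π/ω := by
    have h : π/(2*ω) + π/(2*ω) = π/ω := by ring
    linarith
  have hexpneg : Real.exp (-(γ/2) * τ₀) ≤ 1 := by
    have h := Real.exp_le_exp.2 (show -(γ/2) * τ₀ ≤ 0 by nlinarith)
    simpa using h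
  have hR0nn : 0 ≤ R0 := by rw [hR0]; positivity
  have hR1nn : 0 ≤ R1 := by rw [hR1]; positivity
  have hR0le1 : R0 ≤ 1 := by
    rw [hR0]; nlinarith [Real.exp_pos (-(γ/2) * τ₀)]
  have hR1up : (1 - μ₁)/2 ≤ 1 - R1 := by
    rw [hR1]
    exact aux_up X μ₁ (γ/2 * τ₁) hX0.le hX hμ₁0 hμ₁X ht₁0 ht₁X
  rcases hne.lt_or_gt with h01 | h10
  · -- μ₀ < μ₁ : σ = 1
    have hσ1 : σ = 1 := by rw [hσ, Real.sign_of_pos (by linarith)]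
    have hμ₀lt : μ₀ < 1 := by linarith
    rcases lt_trichotomy R0 R1 with hRlt | hReq | hRgt
    · -- σ' = 1
      have hσ'1 : σ' = 1 := by rw [hσ', Real.sign_of_pos (by linarith)]
      rw [hσ1, hσ'1]
      simp only [one_mul]
      have hR0up : 1 - R0 ≤ (1 - μ₀) + X := by
        rw [hR0, show -(γ/2) * τ₀ = -(γ/2 * τ₀) by ring]
        exact aux_down X μ₀ (γ/2 * τ₀) hμ₀0 hμ₀1 ht₀0 ht₀X
      have h2Xμ₀ : 2*X ≤ 1 - μ₀ := by linarith
      have hq : 0 < 1 - R1 := by linarith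
      apply finish_lemma γ ω τ₀ τ₁ _ _ _ _ hγ hτsum (by linarith) hq (by linarith) h1μ₁
      nlinarith [mul_le_mul (show 1-R0 ≤ (3/2)*(1-μ₀) by linarith)
        (show 1-μ₁ ≤ 2*(1-R1) by linarith) h1μ₁.le (by linarith : (0:ℝ) ≤ (3/2)*(1-μ₀)),
        mul_nonneg (by linarith : (0:ℝ) ≤ 1-μ₀) hq.le]
    · -- σ' = 0
      have hσ'0 : σ' = 0 := by rw [hσ', hReq, sub_self, Real.sign_zero]
      rw [hσ1, hσ'0]
      simp only [zero_mul, sub_zero, one_mul, div_one, Real.log_one, mul_zero]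
      have hlognn : 0 ≤ Real.log ((1 - μ₀) / (1 - μ₁)) :=
        Real.log_nonneg ((one_le_div h1μ₁).2 (by linarith))
      have h1 : 0 ≤ Real.exp 1 / γ := by positivity
      have h2 : 0 ≤ (1/γ) * Real.log ((1 - μ₀) / (1 - μ₁)) :=
        mul_nonneg (by positivity) hlognn
      linarith
    · -- σ' = -1 : excluded by convention
      exfalso
      have hσ'n : σ' = -1 := by rw [hσ', Real.sign_of_neg (by linarith)]
      obtain ⟨h0, h1⟩ := hconv hσ1 hσ'n
      have e0 : R0 = μ₀ := by rw [hR0, h0]; simp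
      have e1 : R1 = μ₁ := by rw [hR1, h1]; simp
      rw [e0, e1] at hRgt
      linarith
  · -- μ₁ < μ₀ : σ = -1
    have hσn : σ = -1 := by rw [hσ, Real.sign_of_neg (by linarith)]
    rcases lt_trichotomy R0 R1 with hRlt | hReq | hRgt
    · -- σ' = 1
      have hσ'1 : σ' = 1 := by rw [hσ', Real.sign_of_pos (by linarith)]
      rw [hσn, hσ'1]
      simp only [one_mul, neg_mul, sub_neg_eq_add]
      have hR0ge : μ₁ * Real.exp (-(γ/2) * τ₀) ≤ R0 := by
        rw [hR0]
        exact mul_le_mul_of_nonneg_right h10.le (Real.exp_pos _).le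
      have hR0up : 1 - μ₁ * Real.exp (-(γ/2) * τ₀) ≤ (1 - μ₁) + X := by
        rw [show -(γ/2) * τ₀ = -(γ/2 * τ₀) by ring]
        exact aux_down X μ₁ (γ/2 * τ₀) hμ₁0 hμ₁1 ht₀0 ht₀X
      have hq : 0 < 1 - R1 := by linarith
      apply finish_lemma γ ω τ₀ τ₁ _ _ _ _ hγ hτsum (by linarith) hq (by linarith) (by linarith)
      nlinarith [mul_le_mul (show 1-R0 ≤ (3/2)*(1-μ₁) by linarith)
        (show 1+μ₁ ≤ 2 by linarith) (by linarith : (0:ℝ) ≤ 1+μ₁)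
        (by linarith : (0:ℝ) ≤ (3/2)*(1-μ₁)),
        mul_le_mul (show (1:ℝ) ≤ 1+μ₀ by linarith) hR1up
        (by linarith : (0:ℝ) ≤ (1-μ₁)/2) (by linarith : (0:ℝ) ≤ 1+μ₀)]
    · -- σ' = 0
      have hσ'0 : σ' = 0 := by rw [hσ', hReq, sub_self, Real.sign_zero]
      rw [hσn, hσ'0]
      simp only [zero_mul, sub_zero, neg_mul, one_mul, sub_neg_eq_add, div_one, Real.log_one,
        mul_zero]
      have hlognn : 0 ≤ Real.log ((1 + μ₀) / (1 + μ₁)) :=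
        Real.log_nonneg ((one_le_div (by linarith)).2 (by linarith))
      have h1 : 0 ≤ Real.exp 1 / γ := by positivity
      have h2 : 0 ≤ (1/γ) * Real.log ((1 + μ₀) / (1 + μ₁)) :=
        mul_nonneg (by positivity) hlognn
      linarith
    · -- σ' = -1
      have hσ'n : σ' = -1 := by rw [hσ', Real.sign_of_neg (by linarith)]
      rw [hσn, hσ'n]
      simp only [neg_mul, one_mul, sub_neg_eq_add]
      apply finish_lemma γ ω τ₀ τ₁ _ _ _ _ hγ hτsum (by linarith) (by linarith)
        (by linarith) (by linarith)
      nlinarith [mul_le_mul hR0le1 hμ₁1 hμ₁0 (by norm_num : (0:ℝ) ≤ 1),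
        mul_nonneg hμ₀0 hR1nn]
end
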